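/- arXiv:1312.3836 — 2 statements merged into one kernel-verified Lean document; each statement's English description precedes it below -/
import Mathlib

section
/- Relabeling nodes of the arc-flow graph by their longest-path labels ψ (and merging nodes that receive identical labels, keeping one copy of parallel arcs with the same item label) preserves the set of achievable packing patterns: every multiset of item weights readable along an s–t path in the original graph whose dimension-wise sum is at most the capacity W is also readable along an s–t path of the compressed graph, and conversely every s–t path of the compressed graph yields a multiset of item weights whose dimension-wise sum is at most W. -/
inductive IsPath {V A : Type} (src dst : A → V) : V → V → List A → Prop
  | nil (v : V) : IsPath src dst v v []
  | cons (a : A) {v w : V} {l : List A} (h : src a = v)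
      (rest : IsPath src dst (dst a) w l) : IsPath src dst v w (a :: l)

/-- The multiset of items read along a path (loss arcs labeled `none` are skipped). -/
def pathItems {A I : Type} (lab : A → Option I) (l : List A) : Multiset I :=
  (l.filterMap lab : List I)

/-- The weight of an arc: the weight of its item, or zero for loss arcs. -/
def arcWeight {A I : Type} {p : ℕ} (lab : A → Option I) (w : I → Fin p → ℕ)
    (a : A) (d : Fin p) : ℕ :=
  match lab a with
  | none => 0
  | some i => w i d

/-!
An `s`–`t` path of `G` is also a path of the compressed graph, with the same arcs. Conversely,
`ψ` increases along every arc by at least the arc's weight, so in each dimension `d` a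
compressed `s`–`t` path weighs at most `ψ t d - ψ s d = ψ t d`. Following tight arcs backwards
from `t` gives an `s`–`t` path of `G` of weight exactly `ψ t d`, which is at most `W d`
because `G` is valid.
-/

section IsPath

variable {V A : Type} {src dst : A → V}

theorem IsPath.concat {u v : V} {l : List A} (hp : IsPath src dst u v l) (a : A)
    (ha : src a = v) : IsPath src dst u (dst a) (l ++ [a]) := by
  induction hp with
  | nil v => exact .cons a ha (.nil _)
  | cons b h _ ih => exact .cons b h (ih ha)

theorem IsPath.map {X : Type} (f : V → X) {u v : V} {l : List A}
    (hp : IsPath src dst u v l) : IsPath (f ∘ src) (f ∘ dst) (f u) (f v) l := by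
  induction hp with
  | nil v => exact .nil _
  | cons a h _ ih => exact .cons a (congrArg f h) ih

theorem IsPath.add_sum_le (c : A → ℕ) (π : V → ℕ)
    (hπ : ∀ a, π (src a) + c a ≤ π (dst a)) {u v : V} {l : List A}
    (hp : IsPath src dst u v l) : π u + (l.map c).sum ≤ π v := by
  induction hp with
  | nil v => simp
  | cons a h _ ih =>
    subst h
    have := hπ a
    simp only [List.map_cons, List.sum_cons]
    omega

theorem exists_isPath_sum_eq (c : A → ℕ) (π : V → ℕ) (ord : V → ℕ)
    (hord : ∀ a, ord (src a) < ord (dst a)) {s : V} (hs : π s = 0)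
    (htight : ∀ v, v ≠ s → ∃ a, dst a = v ∧ π v = π (src a) + c a) (v : V) :
    ∃ l, IsPath src dst s v l ∧ (l.map c).sum = π v := by
  induction hv : ord v using Nat.strong_induction_on generalizing v with
  | _ n ih =>
    by_cases hvs : v = s
    · subst hvs
      exact ⟨[], .nil _, by simp [hs]⟩
    obtain ⟨a, rfl, hπa⟩ := htight v hvs
    obtain ⟨l, hl, hsum⟩ := ih _ (hv ▸ hord a) (src a) rfl
    exact ⟨l ++ [a], hl.concat a rfl, by simp [hsum, hπa]⟩

end IsPath

theorem sum_map_pathItems {A I : Type} {p : ℕ} (lab : A → Option I) (w : I → Fin p → ℕ)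
    (d : Fin p) (l : List A) :
    ((pathItems lab l).map (fun i => w i d)).sum = (l.map (arcWeight lab w · d)).sum := by
  induction l with
  | nil => rfl
  | cons a l ih =>
    cases h : lab a <;>
      simpa [pathItems, List.filterMap_cons, h, arcWeight] using ih

theorem compression_preserves_patterns_general
    {V A I : Type}
    (src dst : A → V) (lab : A → Option I)
    (p : ℕ) (w : I → Fin p → ℕ) (W : Fin p → ℕ) (s t : V)
    (ord : V → ℕ) (hdag : ∀ a : A, ord (src a) < ord (dst a))
    -- validity: every s–t path of G is a feasible pattern for capacity W
    (hvalid : ∀ l : List A, IsPath src dst s t l →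
      ∀ d, ((pathItems lab l).map (fun i => w i d)).sum ≤ W d)
    -- ψ is the longest-path labeling
    (ψ : V → Fin p → ℕ)
    (hψs : ∀ d, ψ s d = 0)
    (hψmax : ∀ v, v ≠ s → ∀ d, ∃ a : A, dst a = v ∧
      ψ v d = ψ (src a) d + arcWeight lab w a d)
    (hψmono : ∀ (a : A) (d : Fin p),
      ψ (src a) d + arcWeight lab w a d ≤ ψ (dst a) d) :
    (∀ l : List A, IsPath src dst s t l →
      (∀ d, ((pathItems lab l).map (fun i => w i d)).sum ≤ W d) →
      ∃ l' : List A, IsPath (ψ ∘ src) (ψ ∘ dst) (ψ s) (ψ t) l' ∧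
        pathItems lab l' = pathItems lab l) ∧
    (∀ l' : List A, IsPath (ψ ∘ src) (ψ ∘ dst) (ψ s) (ψ t) l' →
      ∀ d, ((pathItems lab l').map (fun i => w i d)).sum ≤ W d) := by
  refine ⟨fun l hl _ => ⟨l, hl.map ψ, rfl⟩, fun l' hl' d => ?_⟩
  obtain ⟨l, hl, hsum⟩ := exists_isPath_sum_eq (arcWeight lab w · d) (ψ · d) ord hdag
    (hψs d) (fun v hv => hψmax v hv d) t
  have hψt : ψ t d ≤ W d := by
    simpa only [sum_map_pathItems, hsum] using hvalid l hl d
  have hl'_le := hl'.add_sum_le (arcWeight lab w · d) (· d) (hψmono · d)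
  rw [sum_map_pathItems]
  simp only [hψs, zero_add] at hl'_le
  exact hl'_le.trans hψt

/-- Relabeling the nodes of a valid arc-flow graph by the longest-path labels ψ
(merging nodes with equal labels) preserves the set of achievable packing patterns:
every item multiset readable along an s–t path of the original graph with total
weight ≤ W is readable along an s–t path of the compressed graph (which has node
set `ψ '' V`, source/target maps `ψ ∘ src`, `ψ ∘ dst`), and conversely every s–t
path of the compressed graph reads a multiset of items of total weight ≤ W. -/
theorem compression_preserves_patterns
    {V A I : Type} [Fintype V] [Fintype A]
    (src dst : A → V) (lab : A → Option I)
    (p : ℕ) (w : I → Fin p → ℕ) (W : Fin p → ℕ) (s t : V)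
    (ord : V → ℕ) (hdag : ∀ a : A, ord (src a) < ord (dst a))
    (hsource : ∀ a : A, dst a ≠ s)
    -- every node lies on some s–t path
    (honpath : ∀ v : V, (∃ l, IsPath src dst s v l) ∧ (∃ l, IsPath src dst v t l))
    -- validity: every s–t path of G is a feasible pattern for capacity W
    (hvalid : ∀ l : List A, IsPath src dst s t l →
      ∀ d, ((pathItems lab l).map (fun i => w i d)).sum ≤ W d)
    -- ψ is the longest-path labeling
    (ψ : V → Fin p → ℕ)
    (hψs : ∀ d, ψ s d = 0)
    (hψmax : ∀ v, v ≠ s → ∀ d, ∃ a : A, dst a = v ∧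
      ψ v d = ψ (src a) d + arcWeight lab w a d)
    (hψmono : ∀ (a : A) (d : Fin p),
      ψ (src a) d + arcWeight lab w a d ≤ ψ (dst a) d) :
    (∀ l : List A, IsPath src dst s t l →
      (∀ d, ((pathItems lab l).map (fun i => w i d)).sum ≤ W d) →
      ∃ l' : List A, IsPath (ψ ∘ src) (ψ ∘ dst) (ψ s) (ψ t) l' ∧
        pathItems lab l' = pathItems lab l) ∧
    (∀ l' : List A, IsPath (ψ ∘ src) (ψ ∘ dst) (ψ s) (ψ t) l' →
      ∀ d, ((pathItems lab l').map (fun i => w i d)).sum ≤ W d) :=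
  compression_preserves_patterns_general src dst lab p w W s t ord hdag hvalid ψ hψs hψmax hψmono
end

section
/- If in the MVBP arc-flow model the equality constraints Σ f = b_k are imposed only for item types k with b_k = 1 (set J = {k : b_k = 1}) and inequality constraints Σ f ≥ b_k for the rest, the optimal objective value is unchanged compared to imposing inequality constraints for all item types. -/
theorem List.sum_ite_count {A : Type} [Fintype A] [DecidableEq A] (P : A → Prop)
    [DecidablePred P] (l : List A) :
    (∑ a, if P a then l.count a else 0) = l.countP (fun a => P a) := by
  induction l with
  | nil => simp
  | cons b l ih =>
    simp only [← Finset.sum_filter] at ih ⊢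
    simp [List.count_cons, Finset.sum_add_distrib, ih, List.countP_cons]

theorem Finset.single_le_sum_ite {ι : Type} [Fintype ι] {P : ι → Prop} [DecidablePred P]
    {f : ι → ℕ} {i : ι} (hi : P i) : f i ≤ ∑ j, if P j then f j else 0 := by
  simpa [hi] using Finset.single_le_sum (f := fun j => if P j then f j else 0)
    (fun _ _ => Nat.zero_le _) (Finset.mem_univ i)

theorem Finset.exists_of_sum_ite_ne_zero {ι : Type} [Fintype ι] {P : ι → Prop}
    [DecidablePred P] {f : ι → ℕ} (h : (∑ j, if P j then f j else 0) ≠ 0) :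
    ∃ i, P i ∧ f i ≠ 0 := by
  obtain ⟨i, -, hi⟩ := Finset.exists_ne_zero_of_sum_ne_zero h
  exact ⟨i, (ite_ne_right_iff.mp hi)⟩

theorem Multiset.exists_le_count_map_eq {X κ : Type} [DecidableEq κ] (g : X → κ)
    (M : Multiset X) (d : κ → ℕ) (h : ∀ k, d k ≤ (M.map g).count k) :
    ∃ N ≤ M, ∀ k, (N.map g).count k = d k := by
  induction M using Multiset.induction_on generalizing d with
  | empty => exact ⟨0, le_rfl, fun k => by simpa [eq_comm] using h k⟩
  | cons x M ih =>
    by_cases hx : d (g x) = 0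
    · obtain ⟨N, hNM, hN⟩ := ih d fun k => by
        have := h k
        rw [Multiset.map_cons, Multiset.count_cons] at this
        split_ifs at this with hk
        · exact hk ▸ hx ▸ Nat.zero_le _
        · simpa using this
      exact ⟨N, hNM.trans (Multiset.le_cons_self M x), hN⟩
    · obtain ⟨N, hNM, hN⟩ := ih (fun k => d k - if k = g x then 1 else 0) fun k => by
        have := h k
        rw [Multiset.map_cons, Multiset.count_cons] at this
        omega
      refine ⟨x ::ₘ N, Multiset.cons_le_cons x hNM, fun k => ?_⟩
      rw [Multiset.map_cons, Multiset.count_cons, hN k]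
      split_ifs with hk
      · subst hk; omega
      · simp

theorem Multiset.exists_le_count_map_eq_ite {X κ : Type} [DecidableEq κ] (g : X → κ)
    (M : Multiset X) (b : κ → ℕ) (h : ∀ k, b k ≤ (M.map g).count k) :
    ∃ N ≤ M, ∀ k, (N.map g).count k = if b k = 1 then 1 else (M.map g).count k :=
  M.exists_le_count_map_eq g _ fun k => by
    split_ifs with hk
    · exact hk ▸ h k
    · exact le_rfl

section Paths

variable {V A : Type} {src dst : A → V} {u v w : V} {l l' : List A}

theorem IsPath.append (h : IsPath src dst u v l) (h' : IsPath src dst v w l') :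
    IsPath src dst u w (l ++ l') := by
  induction h with
  | nil => exact h'
  | cons a ha _ ih => exact .cons a ha (ih h')

theorem isPath_append_iff :
    IsPath src dst u w (l ++ l') ↔ ∃ v, IsPath src dst u v l ∧ IsPath src dst v w l' := by
  refine ⟨fun h => ?_, fun ⟨v, h, h'⟩ => h.append h'⟩
  induction l generalizing u with
  | nil => exact ⟨u, .nil u, h⟩
  | cons a l ih =>
    obtain _ | ⟨_, rfl, h⟩ := h
    obtain ⟨v, h, h'⟩ := ih h
    exact ⟨v, .cons a rfl h, h'⟩

theorem isPath_singleton_iff {a : A} : IsPath src dst u v [a] ↔ src a = u ∧ dst a = v := by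
  constructor
  · rintro (_ | ⟨_, rfl, (_ | _)⟩)
    exact ⟨rfl, rfl⟩
  · rintro ⟨rfl, rfl⟩
    exact .cons a rfl (.nil _)

theorem IsPath.exists_path_to_start {s : V} (hreach : ∀ a, ∃ p, IsPath src dst s (src a) p)
    (hl : IsPath src dst u v l) (hv : ∃ p, IsPath src dst s v p) :
    ∃ p, IsPath src dst s u p := by
  cases hl with
  | nil => exact hv
  | cons c hc _ => exact hc ▸ hreach c

variable {ord : V → ℕ}

theorem IsPath.ord_le (hdag : ∀ a, ord (src a) < ord (dst a)) (h : IsPath src dst u v l) :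
    ord u ≤ ord v := by
  induction h with
  | nil => rfl
  | cons a ha _ ih => exact ha ▸ (hdag a).le.trans ih

theorem IsPath.ord_le_ord_src (hdag : ∀ a, ord (src a) < ord (dst a))
    (h : IsPath src dst u v l) : ∀ a ∈ l, ord u ≤ ord (src a) := by
  induction h with
  | nil => simp
  | cons a ha _ ih =>
    subst ha
    rintro b (_ | ⟨_, hb⟩)
    · rfl
    · exact (hdag a).le.trans (ih b hb)

theorem IsPath.ord_dst_le (hdag : ∀ a, ord (src a) < ord (dst a))
    (h : IsPath src dst u v l) : ∀ a ∈ l, ord (dst a) ≤ ord v := by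
  induction h with
  | nil => simp
  | cons a _ rest ih =>
    rintro b (_ | ⟨_, hb⟩)
    · exact rest.ord_le hdag
    · exact ih b hb

theorem IsPath.nodup (hdag : ∀ a, ord (src a) < ord (dst a)) (h : IsPath src dst u v l) :
    l.Nodup := by
  induction h with
  | nil => exact List.nodup_nil
  | cons a _ rest ih =>
    exact List.nodup_cons.mpr ⟨fun ha => (hdag a).not_ge (rest.ord_le_ord_src hdag a ha), ih⟩

theorem IsPath.count_snoc_of_dst_eq [DecidableEq A] (hdag : ∀ a, ord (src a) < ord (dst a))
    {a e : A} (h : IsPath src dst u (src a) l) (he : dst e = dst a) :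
    (l ++ [a]).count e = [a].count e := by
  have : e ∉ l := fun hel => (hdag a).not_ge (he ▸ h.ord_dst_le hdag e hel)
  rw [List.count_append, List.count_eq_zero_of_not_mem this, zero_add]

theorem finite_setOf_isPath [Fintype A] (hdag : ∀ a, ord (src a) < ord (dst a)) :
    {l | IsPath src dst u v l}.Finite :=
  (List.finite_length_le A (Fintype.card A)).subset fun _ hl => (hl.nodup hdag).length_le_card

end Paths

section PathItems

variable {A : Type}

theorem pathItems_append {I : Type} (lab : A → Option I) (l l' : List A) :
    pathItems lab (l ++ l') = pathItems lab l + pathItems lab l' := by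
  simp [pathItems, List.filterMap_append]

theorem pathItems_singleton_of_eq_none {I : Type} {lab : A → Option I} {a : A}
    (h : lab a = none) : pathItems lab [a] = 0 := by
  simp [pathItems, h]

theorem sum_ite_exists_lab_eq_count [Fintype A] [DecidableEq A] {ι : Type} {β : ι → Type}
    [DecidableEq ι] (lab : A → Option (Σ i, β i)) (k : ι)
    [DecidablePred fun a => ∃ j, lab a = some ⟨k, j⟩] (L : List A) :
    (∑ a, if ∃ j, lab a = some ⟨k, j⟩ then L.count a else 0)
      = ((pathItems lab L).map Sigma.fst).count k := by
  rw [List.sum_ite_count]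
  induction L with
  | nil => rfl
  | cons a L ih =>
    rw [List.countP_cons, ih]
    split_ifs with h
    · obtain ⟨j, hj⟩ := of_decide_eq_true h
      simp [pathItems, hj]
    · cases hla : lab a with
      | none => simp [pathItems, hla]
      | some x =>
        obtain ⟨i, j⟩ := x
        have hik : i ≠ k := by
          rintro rfl
          exact h (decide_eq_true ⟨j, hla⟩)
        simp [pathItems, hla, hik]

end PathItems

namespace ArcFlow

section Flow

variable {V A : Type} [Fintype A] [DecidableEq V] {src dst : A → V} {s t : V}
  {z z' : ℕ} {f g : A → ℕ}

def IsFlow (src dst : A → V) (s t : V) (z : ℕ) (f : A → ℕ) : Prop :=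
  ∀ v, (∑ a, if dst a = v then f a else 0) + (if v = s then z else 0)
    = (∑ a, if src a = v then f a else 0) + (if v = t then z else 0)

theorem IsFlow.add (hf : IsFlow src dst s t z f) (hg : IsFlow src dst s t z' g) :
    IsFlow src dst s t (z + z') (f + g) := by
  intro v
  have := hf v
  have := hg v
  simp only [Pi.add_apply, ite_add_zero, Finset.sum_add_distrib]
  split_ifs at * <;> omega

theorem IsFlow.sub (hf : IsFlow src dst s t z f) (hg : IsFlow src dst s t z' g) (hgf : g ≤ f)
    (hz : z' ≤ z) : IsFlow src dst s t (z - z') (f - g) := by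
  intro v
  have hf := hf v
  have hg := hg v
  simp only [← Finset.sum_filter] at *
  have hin := Finset.sum_le_sum (s := {a | dst a = v}) fun a _ => hgf a
  have hout := Finset.sum_le_sum (s := {a | src a = v}) fun a _ => hgf a
  simp only [Pi.sub_apply, Finset.sum_tsub_distrib _ fun a _ => hgf a]
  split_ifs at * <;> omega

theorem _root_.IsPath.isFlow [DecidableEq A] {l : List A} (h : IsPath src dst s t l) :
    IsFlow src dst s t 1 (fun a => l.count a) := by
  intro w
  simp only [List.sum_ite_count]
  induction h with
  | nil => rfl
  | cons a ha _ ih =>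
    subst ha
    simp only [List.countP_cons, decide_eq_true_eq] at *
    split_ifs at * <;> grind

theorem isFlow_count_flatten [DecidableEq A] {PL : List (List A)}
    (h : ∀ l ∈ PL, IsPath src dst s t l) :
    IsFlow src dst s t PL.length (fun a => PL.flatten.count a) := by
  induction PL with
  | nil => intro v; simp
  | cons l PL ih =>
    simp only [List.mem_cons, forall_eq_or_imp] at h
    convert (ih h.2).add h.1.isFlow using 1
    · simp
    · funext a
      simp [List.count_append, add_comm]

variable {ord : V → ℕ}

theorem IsFlow.eq_zero (hdag : ∀ a, ord (src a) < ord (dst a)) (hf : IsFlow src dst s t 0 f) :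
    f = 0 := by
  by_contra hne
  have hsupp : ({a | f a ≠ 0} : Finset A).Nonempty := by
    obtain ⟨a, ha⟩ := Function.ne_iff.mp hne
    exact ⟨a, by simpa using ha⟩
  obtain ⟨a, ha, hmax⟩ := Finset.exists_max_image _ (fun a => ord (dst a)) hsupp
  have hout : (∑ b, if src b = dst a then f b else 0) ≠ 0 := by
    have hin := Finset.single_le_sum_ite (f := f) (P := fun b => dst b = dst a) rfl
    have := hf (dst a)
    simp only [ite_self, add_zero] at this
    simp only [Finset.mem_filter, Finset.mem_univ, true_and] at ha
    omega
  obtain ⟨b, hb, hfb⟩ := Finset.exists_of_sum_ite_ne_zero hout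
  have := hmax b (by simpa using hfb)
  have := hdag b
  rw [hb] at this
  omega

theorem IsFlow.exists_path_of_outflow_ne_zero (hdag : ∀ a, ord (src a) < ord (dst a))
    (hf : IsFlow src dst s t z f) (v : V) (hv : (∑ a, if src a = v then f a else 0) ≠ 0) :
    ∃ l, IsPath src dst v t l ∧ ∀ a ∈ l, f a ≠ 0 := by
  obtain ⟨a, hav, ha⟩ := Finset.exists_of_sum_ite_ne_zero hv
  by_cases hat : dst a = t
  · exact ⟨[a], isPath_singleton_iff.mpr ⟨hav, hat⟩, by simpa⟩
  · have hout : (∑ b, if src b = dst a then f b else 0) ≠ 0 := by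
      have hin := Finset.single_le_sum_ite (f := f) (P := fun b => dst b = dst a) rfl
      have := hf (dst a)
      rw [if_neg hat] at this
      omega
    obtain ⟨l, hl, hpos⟩ := hf.exists_path_of_outflow_ne_zero hdag (dst a) hout
    exact ⟨a :: l, .cons a hav hl, List.forall_mem_cons.mpr ⟨ha, hpos⟩⟩
termination_by (Finset.univ.sup fun a => ord (dst a)) - ord v
decreasing_by
  have : ord (dst a) ≤ Finset.univ.sup fun a => ord (dst a) :=
    Finset.le_sup (f := fun a => ord (dst a)) (Finset.mem_univ a)
  have := hav ▸ hdag a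
  omega

theorem IsFlow.exists_paths [DecidableEq A] (hdag : ∀ a, ord (src a) < ord (dst a))
    (hst : s ≠ t) (hf : IsFlow src dst s t z f) :
    ∃ PL : List (List A), PL.length = z ∧ (∀ l ∈ PL, IsPath src dst s t l) ∧
      f = fun a => PL.flatten.count a := by
  induction z generalizing f with
  | zero => exact ⟨[], rfl, by simp, by funext a; simp [hf.eq_zero hdag]⟩
  | succ z ih =>
    have hs : (∑ a, if src a = s then f a else 0) ≠ 0 := by
      have := hf s
      rw [if_pos rfl, if_neg hst] at this
      omega
    obtain ⟨l, hl, hpos⟩ := hf.exists_path_of_outflow_ne_zero hdag s hs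
    have hle : (fun a => l.count a) ≤ f := fun a => by
      by_cases ha : a ∈ l
      · exact (List.nodup_iff_count_le_one.mp (hl.nodup hdag) a).trans
          (Nat.one_le_iff_ne_zero.mpr (hpos a ha))
      · simp [List.count_eq_zero_of_not_mem ha]
    obtain ⟨PL, hlen, hPL, hfPL⟩ := ih (hf.sub hl.isFlow hle (by omega))
    refine ⟨l :: PL, by simp [hlen], by simpa [hl] using hPL, ?_⟩
    funext a
    have := congrFun hfPL a
    have := hle a
    simp only [List.flatten_cons, List.count_append, Pi.sub_apply] at *
    omega

end Flow

section Rerouting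

variable {A V T I : Type} {src dst : A → V} {lab : A → Option I} {s t : V}
  {st tt : T → V} {bt : A → T} {ord : V → ℕ}

theorem exists_itemless_path_to_start [Fintype A] (hdag : ∀ a, ord (src a) < ord (dst a))
    (hreach : ∀ a, ∃ p, IsPath src dst s (src a) p)
    (hthrough : ∀ l, IsPath src dst s t l → ∀ a ∈ l, dst a = t →
      ∃ mid, IsPath src dst (st (bt a)) (tt (bt a)) mid ∧ pathItems lab mid = pathItems lab l)
    {a : A} (hat : dst a = t) (hsrc : src a = tt (bt a)) (hlab : lab a = none) :
    ∃ p, IsPath src dst s (st (bt a)) p ∧ pathItems lab p = 0 := by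
  have hlast : IsPath src dst (tt (bt a)) t [a] := isPath_singleton_iff.mpr ⟨hsrc, hat⟩
  obtain ⟨p₀, hp₀⟩ := hreach a
  obtain ⟨mid₀, hmid₀, -⟩ := hthrough _ (hp₀.append (hsrc ▸ hlast)) a (by simp) hat
  -- If `p` carried items, rerouting `p ++ mx ++ [a]` would give a pattern of `bt a` with more
  -- items than the maximal pattern `mx`.
  obtain ⟨mx, hmx, hmax⟩ := Set.exists_max_image _ (fun l => Multiset.card (pathItems lab l))
    (finite_setOf_isPath hdag) ⟨mid₀, hmid₀⟩
  obtain ⟨p, hp⟩ := hmx.exists_path_to_start hreach ⟨p₀, hsrc ▸ hp₀⟩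
  obtain ⟨mid, hmid, hitems⟩ := hthrough _ ((hp.append hmx).append hlast) a (by simp) hat
  have := hmax mid hmid
  simp only [hitems, pathItems_append, pathItems_singleton_of_eq_none hlab,
    Multiset.card_add] at this
  exact ⟨p, hp, Multiset.card_eq_zero.mp (by simpa using this)⟩

theorem exists_reroute_path [Fintype A] [DecidableEq A]
    (hdag : ∀ a, ord (src a) < ord (dst a)) (hst : s ≠ t)
    (hreach : ∀ a, ∃ p, IsPath src dst s (src a) p)
    (harc_t : ∀ a, dst a = t → src a = tt (bt a) ∧ lab a = none)
    (hthrough : ∀ l, IsPath src dst s t l → ∀ a ∈ l, dst a = t →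
      ∃ mid, IsPath src dst (st (bt a)) (tt (bt a)) mid ∧ pathItems lab mid = pathItems lab l)
    (hdownward : ∀ τ l (S : Multiset I), IsPath src dst (st τ) (tt τ) l → S ≤ pathItems lab l →
      ∃ l', IsPath src dst (st τ) (tt τ) l' ∧ pathItems lab l' = S)
    {l : List A} (hl : IsPath src dst s t l) {N : Multiset I} (hN : N ≤ pathItems lab l) :
    ∃ l', IsPath src dst s t l' ∧ pathItems lab l' = N ∧
      ∀ e, dst e = t → l'.count e = l.count e := by
  have hne : l ≠ [] := by
    rintro rfl
    cases hl
    exact hst rfl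
  obtain ⟨l₀, a, rfl⟩ : ∃ l₀ a, l = l₀ ++ [a] := ⟨_, _, (List.dropLast_append_getLast hne).symm⟩
  obtain ⟨v, hl₀, hlast⟩ := isPath_append_iff.mp hl
  obtain ⟨rfl, hat⟩ := isPath_singleton_iff.mp hlast
  obtain ⟨hsrc, hlab⟩ := harc_t a hat
  obtain ⟨mid, hmid, hmid_items⟩ := hthrough _ hl a (by simp) hat
  obtain ⟨l', hl', rfl⟩ := hdownward (bt a) mid N hmid (hmid_items ▸ hN)
  obtain ⟨p, hp, hp_items⟩ :=
    exists_itemless_path_to_start hdag hreach hthrough hat hsrc hlab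
  have hpl' : IsPath src dst s (src a) (p ++ l') := hsrc ▸ hp.append hl'
  refine ⟨p ++ l' ++ [a], hpl'.append hlast, by
    rw [pathItems_append, pathItems_append, hp_items, pathItems_singleton_of_eq_none hlab,
      zero_add, add_zero],
    fun e he => ?_⟩
  rw [hpl'.count_snoc_of_dst_eq hdag (he.trans hat.symm),
    hl₀.count_snoc_of_dst_eq hdag (he.trans hat.symm)]

theorem exists_reroute_paths [DecidableEq A]
    (hreroute : ∀ l (N : Multiset I), IsPath src dst s t l → N ≤ pathItems lab l →
      ∃ l', IsPath src dst s t l' ∧ pathItems lab l' = N ∧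
        ∀ e, dst e = t → l'.count e = l.count e)
    {PL : List (List A)} (hPL : ∀ l ∈ PL, IsPath src dst s t l) {N : Multiset I}
    (hN : N ≤ pathItems lab PL.flatten) :
    ∃ PL' : List (List A), PL'.length = PL.length ∧ (∀ l ∈ PL', IsPath src dst s t l) ∧
      pathItems lab PL'.flatten = N ∧ ∀ e, dst e = t → PL'.flatten.count e = PL.flatten.count e := by
  classical
  induction PL generalizing N with
  | nil => exact ⟨[], rfl, by simp, Multiset.le_zero.mp hN |>.symm, by simp⟩
  | cons l PL ih =>
    simp only [List.mem_cons, forall_eq_or_imp] at hPL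
    rw [List.flatten_cons, pathItems_append] at hN
    obtain ⟨l', hl', hl'_items, hl'_count⟩ :=
      hreroute l (N ∩ pathItems lab l) hPL.1 Multiset.inter_le_right
    obtain ⟨PL', hlen, hPL', hPL'_items, hPL'_count⟩ :=
      ih hPL.2 (N := N - pathItems lab l) (tsub_le_iff_left.mpr hN)
    refine ⟨l' :: PL', by simp [hlen], List.forall_mem_cons.mpr ⟨hl', hPL'⟩, ?_,
      fun e he => by simp [List.count_append, hl'_count e he, hPL'_count e he]⟩
    rw [List.flatten_cons, pathItems_append, hl'_items, hPL'_items, add_comm,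
      Multiset.sub_add_inter]

end Rerouting

end ArcFlow

theorem mvbp_arcflow_equality_for_unit_demands_general
    {V A : Type} [Fintype A] [DecidableEq V]
    (m q : ℕ) (b : Fin m → ℕ) (nJ : Fin m → ℕ)
    (C : Fin q → ℕ)
    (src dst : A → V) (lab : A → Option (Σ i : Fin m, Fin (nJ i)))
    (s t : V) (st tt : Fin q → V) (hst : s ≠ t)
    (ord : V → ℕ) (hdag : ∀ a : A, ord (src a) < ord (dst a))
    (honpath : ∀ a : A, ∃ l₁ l₂ : List A,
      IsPath src dst s (src a) l₁ ∧ IsPath src dst (dst a) t l₂)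
    (bt : A → Fin q)
    (harc_t : ∀ a : A, dst a = t → src a = tt (bt a) ∧ lab a = none)
    (hthrough : ∀ l : List A, IsPath src dst s t l → ∀ a ∈ l, dst a = t →
      ∃ mid : List A, IsPath src dst (st (bt a)) (tt (bt a)) mid ∧
        pathItems lab mid = pathItems lab l)
    -- sub-patterns of realizable patterns are realizable (loss arcs allow slack)
    (hdownward : ∀ (τ : Fin q) (l : List A)
        (S' : Multiset (Σ i : Fin m, Fin (nJ i))),
      IsPath src dst (st τ) (tt τ) l → S' ≤ pathItems lab l →
      ∃ l' : List A, IsPath src dst (st τ) (tt τ) l' ∧ pathItems lab l' = S') :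
    sInf {c : ℕ | ∃ (f : A → ℕ) (z : ℕ),
        (∀ v : V,
          (∑ a : A, if dst a = v then f a else 0) + (if v = s then z else 0)
          = (∑ a : A, if src a = v then f a else 0) + (if v = t then z else 0)) ∧
        (∀ k : Fin m,
          b k ≤ ∑ a : A, if ∃ j, lab a = some ⟨k, j⟩ then f a else 0) ∧
        c = ∑ τ : Fin q, C τ *
          (∑ a : A, if src a = tt τ ∧ dst a = t then f a else 0)}
    = sInf {c : ℕ | ∃ (f : A → ℕ) (z : ℕ),
        (∀ v : V,
          (∑ a : A, if dst a = v then f a else 0) + (if v = s then z else 0)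
          = (∑ a : A, if src a = v then f a else 0) + (if v = t then z else 0)) ∧
        (∀ k : Fin m, b k ≠ 1 →
          b k ≤ ∑ a : A, if ∃ j, lab a = some ⟨k, j⟩ then f a else 0) ∧
        (∀ k : Fin m, b k = 1 →
          b k = ∑ a : A, if ∃ j, lab a = some ⟨k, j⟩ then f a else 0) ∧
        c = ∑ τ : Fin q, C τ *
          (∑ a : A, if src a = tt τ ∧ dst a = t then f a else 0)} := by
  classical
  congr 1
  ext c
  constructor
  · rintro ⟨f, z, hflow, hdem, rfl⟩
    obtain ⟨PL, rfl, hPL, rfl⟩ := ArcFlow.IsFlow.exists_paths hdag hst hflow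
    set M := pathItems lab PL.flatten
    replace hdem : ∀ k, b k ≤ (M.map Sigma.fst).count k := fun k => by
      rw [← sum_ite_exists_lab_eq_count lab k]
      exact hdem k
    obtain ⟨N, hNM, hN⟩ := M.exists_le_count_map_eq_ite Sigma.fst b hdem
    have hreach : ∀ a, ∃ p, IsPath src dst s (src a) p := fun a =>
      (honpath a).imp fun _ ⟨_, hp, _⟩ => hp
    obtain ⟨PL', hlen, hPL', rfl, hcount⟩ := ArcFlow.exists_reroute_paths
      (fun _ _ hl hN => ArcFlow.exists_reroute_path hdag hst hreach harc_t hthrough hdownward hl hN)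
      hPL hNM
    refine ⟨fun a => PL'.flatten.count a, PL.length, hlen ▸ ArcFlow.isFlow_count_flatten hPL',
      fun k hk => ?_, fun k hk => ?_, ?_⟩
    · beta_reduce
      rw [sum_ite_exists_lab_eq_count lab k, hN, if_neg hk]
      exact hdem k
    · beta_reduce
      rw [sum_ite_exists_lab_eq_count lab k, hN, if_pos hk, hk]
    · refine Finset.sum_congr rfl fun τ _ => congrArg _ (Finset.sum_congr rfl fun a _ => ?_)
      split_ifs with ha
      exacts [(hcount a ha.2).symm, rfl]
  · rintro ⟨f, z, hflow, hdem_ne, hdem_eq, rfl⟩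
    exact ⟨f, z, hflow, fun k => (eq_or_ne (b k) 1).elim (fun hk => (hdem_eq k hk).le)
      (hdem_ne k), rfl⟩

/-- Imposing the demand constraints with equality only for item types `k` with
`b k = 1` (and inequality `≥ b k` for all other types) does not change the optimal
objective value of the MVBP arc-flow integer program, compared to imposing
inequality constraints for every item type. -/
theorem mvbp_arcflow_equality_for_unit_demands
    {V A : Type} [Fintype V] [Fintype A] [DecidableEq V] [DecidableEq A]
    (m p q : ℕ) (b : Fin m → ℕ) (nJ : Fin m → ℕ)
    (w : (Σ i : Fin m, Fin (nJ i)) → Fin p → ℕ)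
    (Wcap : Fin q → Fin p → ℕ) (C : Fin q → ℕ)
    (src dst : A → V) (lab : A → Option (Σ i : Fin m, Fin (nJ i)))
    (s t : V) (st tt : Fin q → V) (hst : s ≠ t)
    (ord : V → ℕ) (hdag : ∀ a : A, ord (src a) < ord (dst a))
    (honpath : ∀ a : A, ∃ l₁ l₂ : List A,
      IsPath src dst s (src a) l₁ ∧ IsPath src dst (dst a) t l₂)
    (bt : A → Fin q)
    (harc_s : ∀ a : A, src a = s → (∃ τ, dst a = st τ) ∧ lab a = none)
    (harc_t : ∀ a : A, dst a = t → src a = tt (bt a) ∧ lab a = none)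
    (hs_noin : ∀ a : A, dst a ≠ s) (ht_noout : ∀ a : A, src a ≠ t)
    (hthrough : ∀ l : List A, IsPath src dst s t l → ∀ a ∈ l, dst a = t →
      ∃ mid : List A, IsPath src dst (st (bt a)) (tt (bt a)) mid ∧
        pathItems lab mid = pathItems lab l)
    -- sub-patterns of realizable patterns are realizable (loss arcs allow slack)
    (hdownward : ∀ (τ : Fin q) (l : List A)
        (S' : Multiset (Σ i : Fin m, Fin (nJ i))),
      IsPath src dst (st τ) (tt τ) l → S' ≤ pathItems lab l →
      ∃ l' : List A, IsPath src dst (st τ) (tt τ) l' ∧ pathItems lab l' = S') :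
    sInf {c : ℕ | ∃ (f : A → ℕ) (z : ℕ),
        (∀ v : V,
          (∑ a : A, if dst a = v then f a else 0) + (if v = s then z else 0)
          = (∑ a : A, if src a = v then f a else 0) + (if v = t then z else 0)) ∧
        (∀ k : Fin m,
          b k ≤ ∑ a : A, if ∃ j, lab a = some ⟨k, j⟩ then f a else 0) ∧
        c = ∑ τ : Fin q, C τ *
          (∑ a : A, if src a = tt τ ∧ dst a = t then f a else 0)}
    = sInf {c : ℕ | ∃ (f : A → ℕ) (z : ℕ),
        (∀ v : V,
          (∑ a : A, if dst a = v then f a else 0) + (if v = s then z else 0)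
          = (∑ a : A, if src a = v then f a else 0) + (if v = t then z else 0)) ∧
        (∀ k : Fin m, b k ≠ 1 →
          b k ≤ ∑ a : A, if ∃ j, lab a = some ⟨k, j⟩ then f a else 0) ∧
        (∀ k : Fin m, b k = 1 →
          b k = ∑ a : A, if ∃ j, lab a = some ⟨k, j⟩ then f a else 0) ∧
        c = ∑ τ : Fin q, C τ *
          (∑ a : A, if src a = tt τ ∧ dst a = t then f a else 0)} :=
  mvbp_arcflow_equality_for_unit_demands_general m q b nJ C src dst lab s t st tt hst ord hdag
    honpath bt harc_t hthrough hdownward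
end
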